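/- Let b_a, y_a satisfy 0 < b_a < y_a, let θ̄ ∈ [0,1) with θ := 1 − θ̄ and b_a/y_a > θ̄, and let α̂ be the minimal admissible slope, given by α̂ = 2(1 − b_a/y_a)/y_a if b_a/y_a ≥ (1 + θ̄)/2 and α̂ = θ²/(2(b_a − θ̄·y_a)) otherwise. Then the unconstrained maximal cutoff x̂_U(α) is monotonically increasing in α, x̂_U(α̂) = 0, and for every α ≥ α̂ one has 0 ≤ x̂_U(α) ≤ y_a. -/

import Mathlib

noncomputable section

namespace PAMM

/-- The unconstrained maximal upper cutoff `x̂_U(α)`: equal to `y_a − √(2Δ_a/α)` when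
    `α·Δ_a ≤ θ²/2` and `y_a − Δ_a/θ − θ/(2α)` otherwise, where `Δ_a := y_a − b_a`
    and `θ := 1 − θ̄`. -/
def xUHat (θbar α ba ya : ℝ) : ℝ :=
  if α * (ya - ba) ≤ (1 - θbar) ^ 2 / 2 then ya - Real.sqrt (2 * (ya - ba) / α)
  else ya - (ya - ba) / (1 - θbar) - (1 - θbar) / (2 * α)

/-! As a function of `u = 1/α`, `y_a - x̂_U` is `√(2Δ_a u)` for `u ≥ 2Δ_a/θ²` and, below that
point, its tangent line `Δ_a/θ + θu/2` there; both pieces increase in `u`, so `x̂_U` increases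
in `α`. The slope `α̂` (`minSlope`) is the zero of `x̂_U`: the sqrt branch vanishes at
`α = 2Δ_a/y_a²`, the linear one at `α = θ²/(2(b_a - θ̄ y_a))`, and the case split in `α̂` records
which branch contains the zero. -/

def minSlope (θbar ba ya : ℝ) : ℝ :=
  if (1 + θbar) / 2 ≤ ba / ya then 2 * (1 - ba / ya) / ya
  else (1 - θbar) ^ 2 / (2 * (ba - θbar * ya))

variable {θbar α ba ya : ℝ}

theorem xUHat_eq_sqrt_branch (h : α * (ya - ba) ≤ (1 - θbar) ^ 2 / 2) :
    xUHat θbar α ba ya = ya - √(2 * (ya - ba) / α) :=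
  if_pos h

/-- Both branches equal `y_a - 2Δ_a/θ` at the kink `α Δ_a = θ²/2`. -/
theorem xUHat_eq_linear_branch (hθ : θbar < 1) (hΔ : ba < ya)
    (h : (1 - θbar) ^ 2 / 2 ≤ α * (ya - ba)) :
    xUHat θbar α ba ya = ya - (ya - ba) / (1 - θbar) - (1 - θbar) / (2 * α) := by
  rcases h.lt_or_eq with h | h
  · exact if_neg h.not_ge
  · have hθ' : 0 < 1 - θbar := sub_pos.2 hθ
    have hΔ' : 0 < ya - ba := sub_pos.2 hΔ
    have hα : α = (1 - θbar) ^ 2 / (2 * (ya - ba)) := by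
      field_simp
      linarith
    have hsq : 2 * (ya - ba) / α = (2 * (ya - ba) / (1 - θbar)) ^ 2 := by
      rw [hα]
      field_simp
    rw [xUHat_eq_sqrt_branch h.ge, hsq, Real.sqrt_sq (by positivity), hα]
    field_simp
    ring

theorem monotoneOn_xUHat (hθ : θbar < 1) (hΔ : ba < ya) :
    MonotoneOn (fun α => xUHat θbar α ba ya) (Set.Ioi 0) := by
  have hθ' : 0 < 1 - θbar := sub_pos.2 hθ
  have hΔ' : 0 < ya - ba := sub_pos.2 hΔ
  set c := (1 - θbar) ^ 2 / (2 * (ya - ba)) with hc_def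
  have hc : 0 < c := by positivity
  have hkink : c * (ya - ba) = (1 - θbar) ^ 2 / 2 := by
    rw [hc_def]
    field_simp
  rw [← Set.Ioc_union_Ici_eq_Ioi hc]
  refine MonotoneOn.union_right ?_ ?_ ⟨Set.right_mem_Ioc.2 hc, fun _ h => h.2⟩
    ⟨Set.self_mem_Ici, fun _ h => h⟩
  · intro a ha b hb hab
    have hsqrt : ∀ x ≤ c, x * (ya - ba) ≤ (1 - θbar) ^ 2 / 2 := fun x hx =>
      hkink ▸ mul_le_mul_of_nonneg_right hx hΔ'.le
    simp only [xUHat_eq_sqrt_branch (hsqrt a ha.2), xUHat_eq_sqrt_branch (hsqrt b hb.2)]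
    gcongr
    exact ha.1
  · intro a ha b hb hab
    have hlin : ∀ x ≥ c, (1 - θbar) ^ 2 / 2 ≤ x * (ya - ba) := fun x hx =>
      hkink ▸ mul_le_mul_of_nonneg_right hx hΔ'.le
    simp only [xUHat_eq_linear_branch hθ hΔ (hlin a ha),
      xUHat_eq_linear_branch hθ hΔ (hlin b hb)]
    gcongr
    exact mul_pos two_pos (hc.trans_le ha)

theorem xUHat_le (hθ : θbar < 1) (hΔ : ba < ya) : xUHat θbar α ba ya ≤ ya := by
  have hθ' : 0 < 1 - θbar := sub_pos.2 hθ
  have hΔ' : 0 < ya - ba := sub_pos.2 hΔ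
  rcases le_total (α * (ya - ba)) ((1 - θbar) ^ 2 / 2) with h | h
  · rw [xUHat_eq_sqrt_branch h]
    linarith [Real.sqrt_nonneg (2 * (ya - ba) / α)]
  · have hα : 0 < α := pos_of_mul_pos_left ((by positivity : (0 : ℝ) < _).trans_le h) hΔ'.le
    have hpos : 0 < (ya - ba) / (1 - θbar) + (1 - θbar) / (2 * α) := by positivity
    rw [xUHat_eq_linear_branch hθ hΔ h]
    linarith

theorem minSlope_pos (hya : 0 < ya) (hΔ : ba < ya) (hra : θbar < ba / ya) :
    0 < minSlope θbar ba ya := by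
  have hr : ba / ya < 1 := (div_lt_one hya).2 hΔ
  have hθbar : θbar * ya < ba := (lt_div_iff₀ hya).1 hra
  unfold minSlope
  split_ifs
  · exact div_pos (by linarith) hya
  · exact div_pos (pow_pos (by linarith) 2) (by linarith)

theorem xUHat_minSlope (hya : 0 < ya) (hΔ : ba < ya) (hra : θbar < ba / ya) :
    xUHat θbar (minSlope θbar ba ya) ba ya = 0 := by
  have hr : ba / ya < 1 := (div_lt_one hya).2 hΔ
  obtain ⟨r, rfl⟩ : ∃ r, ba = r * ya := ⟨ba / ya, (div_mul_cancel₀ ba hya.ne').symm⟩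
  rw [mul_div_cancel_right₀ r hya.ne'] at hr hra
  have hθ : 1 - θbar ≠ 0 := by linarith
  unfold minSlope
  rw [mul_div_cancel_right₀ r hya.ne']
  split_ifs with h
  · have hcond : 2 * (1 - r) / ya * (ya - r * ya) ≤ (1 - θbar) ^ 2 / 2 := by
      rw [div_mul_eq_mul_div, div_le_div_iff₀ hya two_pos]
      have hgap : 0 ≤ (1 - θbar) - 2 * (1 - r) := by linarith
      have hsum : 0 ≤ (1 - θbar) + 2 * (1 - r) := by linarith
      nlinarith [mul_nonneg (mul_nonneg hya.le hgap) hsum]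
    have harg : 2 * (ya - r * ya) / (2 * (1 - r) / ya) = ya ^ 2 := by
      have : 1 - r ≠ 0 := by linarith
      field_simp
    rw [xUHat_eq_sqrt_branch hcond, harg, Real.sqrt_sq hya.le, sub_self]
  · have hcond : (1 - θbar) ^ 2 / 2 ≤
        (1 - θbar) ^ 2 / (2 * (r * ya - θbar * ya)) * (ya - r * ya) := by
      rw [div_mul_eq_mul_div, div_le_div_iff₀ two_pos (by nlinarith)]
      have hr2 : 0 ≤ 1 + θbar - 2 * r := by linarith [not_le.1 h]
      nlinarith [mul_nonneg (sq_nonneg (1 - θbar)) (mul_nonneg hya.le hr2)]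
    rw [xUHat_eq_linear_branch (by linarith) hΔ hcond]
    field_simp
    ring

theorem xUHat_monotone_and_bounded_general
    (ba ya θbar : ℝ)
    (hba : 0 < ba) (hbya : ba < ya)
    (hθ1 : θbar < 1)
    (hra : θbar < ba / ya) :
    let θ : ℝ := 1 - θbar
    let αhat : ℝ := if (1 + θbar) / 2 ≤ ba / ya then 2 * (1 - ba / ya) / ya
      else θ ^ 2 / (2 * (ba - θbar * ya))
    MonotoneOn (fun α => xUHat θbar α ba ya) (Set.Ioi (0:ℝ)) ∧
    xUHat θbar αhat ba ya = 0 ∧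
    (∀ α : ℝ, αhat ≤ α → 0 ≤ xUHat θbar α ba ya ∧ xUHat θbar α ba ya ≤ ya) := by
  intro θ αhat
  have hya : 0 < ya := hba.trans hbya
  have hmono := monotoneOn_xUHat hθ1 hbya
  have hzero : xUHat θbar αhat ba ya = 0 := xUHat_minSlope hya hbya hra
  have hpos : 0 < αhat := minSlope_pos hya hbya hra
  refine ⟨hmono, hzero, fun α hα => ⟨?_, xUHat_le hθ1 hbya⟩⟩
  simpa only [hzero] using hmono hpos (hpos.trans_le hα) hα

/-- sanity lemma for `x̂_U`: `x̂_U(α)` is monotonically increasing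
    in `α` (on positive slopes), `x̂_U(α̂) = 0` for the minimal admissible slope `α̂`,
    and `0 ≤ x̂_U(α) ≤ y_a` for every `α ≥ α̂`. -/
theorem xUHat_monotone_and_bounded
    (ba ya θbar : ℝ)
    (hba : 0 < ba) (hbya : ba < ya)
    (hθ0 : 0 ≤ θbar) (hθ1 : θbar < 1)
    (hra : θbar < ba / ya) :
    let θ : ℝ := 1 - θbar
    let αhat : ℝ := if (1 + θbar) / 2 ≤ ba / ya then 2 * (1 - ba / ya) / ya
      else θ ^ 2 / (2 * (ba - θbar * ya))
    MonotoneOn (fun α => xUHat θbar α ba ya) (Set.Ioi (0:ℝ)) ∧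
    xUHat θbar αhat ba ya = 0 ∧
    (∀ α : ℝ, αhat ≤ α → 0 ≤ xUHat θbar α ba ya ∧ xUHat θbar α ba ya ≤ ya) :=
  xUHat_monotone_and_bounded_general ba ya θbar hba hbya hθ1 hra

end PAMM
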